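/- arXiv:2309.10372 — 2 statements merged into one kernel-verified Lean document; each statement's English description precedes it below -/
import Mathlib

section
/- Let D ⊆ ℝᵐ, let φ_ifc, φ₁⁻, …, φ_k⁻, φ₁⁺, …, φ_k⁺ : ℝᵐ → ℝ, and suppose the big-M constants satisfy: M_t⁺ ≥ φ_ifc(p) and M_t⁻ ≤ φ_ifc(p) for all p ∈ D; M_i⁻ ≤ φ_i⁻(p) for all p ∈ D with φ_ifc(p) ≥ 0; and M_i⁺ ≤ φ_i⁺(p) for all p ∈ D with φ_ifc(p) ≤ 0. Then for every p ∈ D such that either (φ_ifc(p) ≤ 0 and φ_i⁻(p) ≥ 0 for all i) or (φ_ifc(p) ≥ 0 and φ_i⁺(p) ≥ 0 for all i), there exists t ∈ {0,1} such that φ_ifc(p) ≤ M_t⁺·t, φ_ifc(p) ≥ M_t⁻·(1−t), φ_i⁻(p) ≥ M_i⁻·t for all i, and φ_i⁺(p) ≥ M_i⁺·(1−t) for all i. -/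
section ToggleFeasible

variable {α ι : Type*}

/-- Constraints (7)–(10) on the toggle `t` at the point `p`. -/
def ToggleFeasible (φifc : α → ℝ) (φm φp : ι → α → ℝ) (Mtp Mtm : ℝ) (Mm Mp : ι → ℝ)
    (p : α) (t : ℝ) : Prop :=
  φifc p ≤ Mtp * t ∧ Mtm * (1 - t) ≤ φifc p ∧
    (∀ i, Mm i * t ≤ φm i p) ∧ ∀ i, Mp i * (1 - t) ≤ φp i p

variable {φifc : α → ℝ} {φm φp : ι → α → ℝ} {Mtp Mtm : ℝ} {Mm Mp : ι → ℝ} {p : α}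

theorem toggleFeasible_zero_iff :
    ToggleFeasible φifc φm φp Mtp Mtm Mm Mp p 0 ↔
      φifc p ≤ 0 ∧ Mtm ≤ φifc p ∧ (∀ i, 0 ≤ φm i p) ∧ ∀ i, Mp i ≤ φp i p := by
  simp only [ToggleFeasible, mul_zero, sub_zero, mul_one]

theorem toggleFeasible_one_iff :
    ToggleFeasible φifc φm φp Mtp Mtm Mm Mp p 1 ↔
      φifc p ≤ Mtp ∧ 0 ≤ φifc p ∧ (∀ i, Mm i ≤ φm i p) ∧ ∀ i, 0 ≤ φp i p := by
  simp only [ToggleFeasible, mul_one, sub_self, mul_zero]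

end ToggleFeasible

/-- Completeness of the MILP representation of a PwCA: with valid big-M
constants, every point of the PwCA feasible region admits a feasible binary
toggle `t ∈ {0,1}` satisfying constraints (7)–(10). -/
theorem pwca_milp_complete {m : ℕ} {ι : Type*}
    (D : Set (Fin m → ℝ))
    (φifc : (Fin m → ℝ) → ℝ) (φm φp : ι → (Fin m → ℝ) → ℝ)
    (Mtp Mtm : ℝ) (Mm Mp : ι → ℝ)
    (hMtp : ∀ p ∈ D, φifc p ≤ Mtp)
    (hMtm : ∀ p ∈ D, Mtm ≤ φifc p)
    (hMm : ∀ i : ι, ∀ p ∈ D, 0 ≤ φifc p → Mm i ≤ φm i p)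
    (hMp : ∀ i : ι, ∀ p ∈ D, φifc p ≤ 0 → Mp i ≤ φp i p) :
    ∀ p ∈ D,
      ((φifc p ≤ 0 ∧ ∀ i : ι, 0 ≤ φm i p) ∨
        (0 ≤ φifc p ∧ ∀ i : ι, 0 ≤ φp i p)) →
      ∃ t : ℝ, (t = 0 ∨ t = 1) ∧
        φifc p ≤ Mtp * t ∧
        Mtm * (1 - t) ≤ φifc p ∧
        (∀ i : ι, Mm i * t ≤ φm i p) ∧
        (∀ i : ι, Mp i * (1 - t) ≤ φp i p) := by
  rintro p hp (⟨hifc, hφm⟩ | ⟨hifc, hφp⟩)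
  · exact ⟨0, .inl rfl,
      toggleFeasible_zero_iff.2 ⟨hifc, hMtm p hp, hφm, fun i => hMp i p hp hifc⟩⟩
  · exact ⟨1, .inr rfl,
      toggleFeasible_one_iff.2 ⟨hMtp p hp, hifc, fun i => hMm i p hp hifc, hφp⟩⟩
end

section
/- Let g : ℝⁿ → ℝ be affine, let y₁⁻, …, y_k⁻ and y₁⁺, …, y_k⁺ : ℝⁿ → ℝ be affine functions with y_i⁻ = y_i⁺ on {g = 0} for each i, and let h(x) = max_i y_i⁻(x) if g(x) ≤ 0 and h(x) = max_i y_i⁺(x) otherwise. Fix a box X ⊆ ℝⁿ and an interval [y_min, y_max], and set D = X × [y_min, y_max] ⊆ ℝ^{n+1}. Define φ_ifc(x, y) = g(x), φ_i⁻(x, y) = y − y_i⁻(x), φ_i⁺(x, y) = y − y_i⁺(x), and take the big-M constants M_t⁺ = max_{p∈D} φ_ifc(p), M_t⁻ = min_{p∈D} φ_ifc(p), M_i⁻ = min{φ_i⁻(p) : p ∈ D, φ_ifc(p) ≥ 0}, M_i⁺ = min{φ_i⁺(p) : p ∈ D, φ_ifc(p) ≤ 0}. Then for every x ∈ X with y_min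 ≤ h(x) ≤ y_max, the set {y ∈ [y_min, y_max] : ∃ t ∈ {0,1} such that constraints (7)–(10) hold at p = (x, y)} equals the interval [h(x), y_max]; in particular its minimum is h(x). -/
/-!
With `t = 0` the constraints (7)–(10) say `g x ≤ 0` and `y ≥ y_i⁻(x)` for all `i`, with `t = 1`
they say `g x ≥ 0` and `y ≥ y_i⁺(x)` for all `i`; the remaining constraints are switched off,
because each big-M constant is an extremum of the corresponding function over (the relevant part
of) the compact set `D` containing `(x, y)`. So feasibility of `y` is the disjunction of the two
epigraph conditions, and since the two pieces agree on `{g = 0}` this disjunction is `h x ≤ y`.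
-/

open Set

theorem exists_binary_bigM_iff {ι : Type*} {a Mtp Mtm : ℝ} {u v Mm Mp : ι → ℝ}
    (hMtp : a ≤ Mtp) (hMtm : Mtm ≤ a)
    (hMm : 0 ≤ a → ∀ i, Mm i ≤ u i) (hMp : a ≤ 0 → ∀ i, Mp i ≤ v i) :
    (∃ t : ℝ, (t = 0 ∨ t = 1) ∧ a ≤ Mtp * t ∧ Mtm * (1 - t) ≤ a ∧
        (∀ i, Mm i * t ≤ u i) ∧ (∀ i, Mp i * (1 - t) ≤ v i)) ↔
      (a ≤ 0 ∧ ∀ i, 0 ≤ u i) ∨ (0 ≤ a ∧ ∀ i, 0 ≤ v i) := by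
  constructor
  · rintro ⟨t, rfl | rfl, ha, ha', hu, hv⟩
    · left
      simp_all
    · right
      simp_all
  · rintro (⟨ha, hu⟩ | ⟨ha, hv⟩)
    · exact ⟨0, Or.inl rfl, by simpa using ha, by simpa using hMtm, by simpa using hu,
        by simpa using hMp ha⟩
    · exact ⟨1, Or.inr rfl, by simpa using hMtp, by simpa using ha, by simpa using hMm ha,
        by simpa using hv⟩

theorem IsCompact.csInf_image_le {α : Type*} [TopologicalSpace α] {K S : Set α} {f : α → ℝ}
    (hK : IsCompact K) (hf : ContinuousOn f K) (hSK : S ⊆ K) {p : α} (hp : p ∈ S) :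
    sInf (f '' S) ≤ f p :=
  csInf_le ((hK.bddBelow_image hf).mono (image_mono hSK)) (mem_image_of_mem f hp)

theorem IsCompact.le_csSup_image {α : Type*} [TopologicalSpace α] {K : Set α} {f : α → ℝ}
    (hK : IsCompact K) (hf : ContinuousOn f K) {p : α} (hp : p ∈ K) :
    f p ≤ sSup (f '' K) :=
  le_csSup (hK.bddAbove_image hf) (mem_image_of_mem f hp)

theorem sep_Icc_eq_Icc_of_iff {β : Type*} [Preorder β] {a b c : β} {P : β → Prop} (hac : a ≤ c)
    (hP : ∀ y ∈ Icc a b, P y ↔ c ≤ y) : {y ∈ Icc a b | P y} = Icc c b := by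
  ext y
  constructor
  · rintro ⟨hy, hPy⟩
    exact ⟨(hP y hy).1 hPy, hy.2⟩
  · rintro ⟨hcy, hyb⟩
    exact ⟨⟨hac.trans hcy, hyb⟩, (hP y ⟨hac.trans hcy, hyb⟩).2 hcy⟩

section PwCA

variable {α ι : Type*} [Fintype ι] [Nonempty ι]

noncomputable def pwca (g : α → ℝ) (ym yp : ι → α → ℝ) (x : α) : ℝ :=
  if g x ≤ 0 then Finset.univ.sup' Finset.univ_nonempty (fun i => ym i x)
  else Finset.univ.sup' Finset.univ_nonempty (fun i => yp i x)

theorem pwca_le_iff {g : α → ℝ} {ym yp : ι → α → ℝ}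
    (hagree : ∀ i x, g x = 0 → ym i x = yp i x) {x : α} {y : ℝ} :
    pwca g ym yp x ≤ y ↔ (g x ≤ 0 ∧ ∀ i, ym i x ≤ y) ∨ (0 ≤ g x ∧ ∀ i, yp i x ≤ y) := by
  unfold pwca
  split_ifs with hg
  · simp only [Finset.sup'_le_iff, Finset.mem_univ, true_implies]
    refine ⟨fun hym => Or.inl ⟨hg, hym⟩, ?_⟩
    rintro (⟨-, hym⟩ | ⟨hg', hyp⟩)
    · exact hym
    · intro i
      rw [hagree i x (le_antisymm hg hg')]
      exact hyp i
  · simp only [Finset.sup'_le_iff, Finset.mem_univ, true_implies]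
    refine ⟨fun hyp => Or.inr ⟨(not_le.mp hg).le, hyp⟩, ?_⟩
    rintro (⟨hg', -⟩ | ⟨-, hyp⟩)
    · exact absurd hg' hg
    · exact hyp

end PwCA

/-- The MILP representation (7)–(10) of a PwCA with a single binary toggle
exactly represents the epigraph of the PwCA function `h` over the bounded
domain `D = X × [ymin, ymax]`: for every `x ∈ X` with `ymin ≤ h x ≤ ymax`,
the set of feasible `y ∈ [ymin, ymax]` is exactly `[h x, ymax]`. -/
theorem pwca_milp_epigraph {n : ℕ} {ι : Type*} [Fintype ι] [Nonempty ι]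
    (g : (Fin n → ℝ) →ᵃ[ℝ] ℝ)
    (ym yp : ι → ((Fin n → ℝ) →ᵃ[ℝ] ℝ))
    (hagree : ∀ i : ι, ∀ x : Fin n → ℝ, g x = 0 → ym i x = yp i x)
    (h : (Fin n → ℝ) → ℝ)
    (hh : ∀ x : Fin n → ℝ, h x =
      if g x ≤ 0 then Finset.univ.sup' Finset.univ_nonempty (fun i : ι => ym i x)
      else Finset.univ.sup' Finset.univ_nonempty (fun i : ι => yp i x))
    (lo hi : Fin n → ℝ) (ymin ymax : ℝ)
    (X : Set (Fin n → ℝ)) (hX : X = Set.Icc lo hi)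
    (D : Set ((Fin n → ℝ) × ℝ)) (hD : D = X ×ˢ Set.Icc ymin ymax)
    (φifc : (Fin n → ℝ) × ℝ → ℝ) (hφifc : ∀ p, φifc p = g p.1)
    (φm φp : ι → (Fin n → ℝ) × ℝ → ℝ)
    (hφm : ∀ i p, φm i p = p.2 - ym i p.1)
    (hφp : ∀ i p, φp i p = p.2 - yp i p.1)
    (Mtp Mtm : ℝ) (Mm Mp : ι → ℝ)
    (hMtp : Mtp = sSup (φifc '' D))
    (hMtm : Mtm = sInf (φifc '' D))
    (hMm : ∀ i, Mm i = sInf (φm i '' {p ∈ D | 0 ≤ φifc p}))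
    (hMp : ∀ i, Mp i = sInf (φp i '' {p ∈ D | φifc p ≤ 0})) :
    ∀ x ∈ X, ymin ≤ h x → h x ≤ ymax →
      {y ∈ Set.Icc ymin ymax | ∃ t : ℝ, (t = 0 ∨ t = 1) ∧
          φifc (x, y) ≤ Mtp * t ∧
          Mtm * (1 - t) ≤ φifc (x, y) ∧
          (∀ i : ι, Mm i * t ≤ φm i (x, y)) ∧
          (∀ i : ι, Mp i * (1 - t) ≤ φp i (x, y))} =
        Set.Icc (h x) ymax := by
  intro x hx hxmin _
  have hDc : IsCompact D := hD ▸ hX ▸ isCompact_Icc.prod isCompact_Icc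
  have hcont_ifc : Continuous φifc :=
    (g.continuous_of_finiteDimensional.comp continuous_fst).congr fun p => (hφifc p).symm
  have hcont_m (i : ι) : Continuous (φm i) :=
    (continuous_snd.sub ((ym i).continuous_of_finiteDimensional.comp continuous_fst)).congr
      fun p => (hφm i p).symm
  have hcont_p (i : ι) : Continuous (φp i) :=
    (continuous_snd.sub ((yp i).continuous_of_finiteDimensional.comp continuous_fst)).congr
      fun p => (hφp i p).symm
  refine sep_Icc_eq_Icc_of_iff hxmin fun y hy => ?_
  have hxy : (x, y) ∈ D := by subst hD hX; exact ⟨hx, hy⟩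
  rw [exists_binary_bigM_iff (hMtp ▸ hDc.le_csSup_image hcont_ifc.continuousOn hxy)
    (hMtm ▸ hDc.csInf_image_le hcont_ifc.continuousOn subset_rfl hxy)
    (fun hg i => hMm i ▸ hDc.csInf_image_le (hcont_m i).continuousOn (sep_subset _ _) ⟨hxy, hg⟩)
    (fun hg i => hMp i ▸ hDc.csInf_image_le (hcont_p i).continuousOn (sep_subset _ _) ⟨hxy, hg⟩),
    show h x = pwca g (fun i => ym i) (fun i => yp i) x from hh x, pwca_le_iff hagree]
  simp only [hφifc, hφm, hφp, sub_nonneg]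
end
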